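/- Let L and M be positive definite Hermitian matrices in M_2(O) and suppose P ∈ M_2(O) satisfies M P = ± P' L (either sign). Then det P is a rational integer and P* M P = |det P| · L. -/

import Mathlib

open scoped ComplexOrder

/-- The involution `P ↦ P'` on `M₂(K)`: `[[a,b],[c,d]] ↦ [[d̄,-c̄],[-b̄,ā]]`. -/
def pprime {K : Type*} [Field K] (σ : K → K) (P : Matrix (Fin 2) (Fin 2) K) :
    Matrix (Fin 2) (Fin 2) K :=
  !![σ (P 1 1), -(σ (P 1 0)); -(σ (P 0 1)), σ (P 0 0)]

/-- Conjugate transpose of a `2×2` matrix with respect to the conjugation `σ`. -/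
def cstar {K : Type*} [Field K] (σ : K → K) (P : Matrix (Fin 2) (Fin 2) K) :
    Matrix (Fin 2) (Fin 2) K :=
  !![σ (P 0 0), σ (P 1 0); σ (P 0 1), σ (P 1 1)]

/-! Since `P' = (adj P)*`, applying `*` to `M P = ± P' L` gives `P* M = ± L adj P`, hence
`P* M P = d • L` with `d = ± det P`. The left side is Hermitian and `L ≠ 0`, so `d` is fixed by the
conjugation, hence rational, hence a rational integer. Finally `P* M P` is positive semidefinite
while `L` is positive definite, so `d ≥ 0`, i.e. `d = |det P|`. -/

open Matrix

theorem AlgEquiv.exists_algebraMap_eq_of_apply_eq_self {F A : Type*} [Field F] [Ring A]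
    [IsDomain A] [Algebra F A] (hA : (Module.finrank F A).Prime) {σ : A ≃ₐ[F] A}
    (hσ : σ ≠ AlgEquiv.refl) {x : A} (hx : σ x = x) : ∃ q : F, algebraMap F A q = x := by
  have := Subalgebra.isSimpleOrder_of_finrank_prime F A hA
  rcases IsSimpleOrder.eq_bot_or_eq_top (AlgHom.equalizer (σ : A →ₐ[F] A) (AlgHom.id F A))
    with hbot | htop
  · exact Algebra.mem_bot.mp (hbot ▸ (AlgHom.mem_equalizer _ _ x).mpr hx)
  · refine absurd (AlgEquiv.ext fun y => ?_) hσ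
    exact (AlgHom.mem_equalizer _ _ y).mp (htop ▸ Algebra.mem_top)

theorem exists_intCast_eq_of_isIntegral_of_algebraMap_eq {K : Type*} [Field K] [CharZero K]
    {x : K} (hx : IsIntegral ℤ x) {q : ℚ} (hq : algebraMap ℚ K q = x) : ∃ n : ℤ, x = n := by
  obtain ⟨n, rfl⟩ := IsIntegrallyClosed.isIntegral_iff.mp
    ((isIntegral_algebraMap_iff (algebraMap ℚ K).injective).mp (hq ▸ hx))
  exact ⟨n, by rw [← hq, algebraMap_int_eq, eq_intCast, map_intCast]⟩

section Cstar

variable {K : Type*} [Field K]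

theorem cstar_eq_transpose_map (f : K → K) (A : Matrix (Fin 2) (Fin 2) K) :
    cstar f A = (A.map f)ᵀ := by
  ext i j
  fin_cases i <;> fin_cases j <;> rfl

theorem pprime_eq_cstar_adjugate (f : K →+* K) (A : Matrix (Fin 2) (Fin 2) K) :
    pprime f A = cstar f A.adjugate := by
  ext i j
  fin_cases i <;> fin_cases j <;> simp [pprime, cstar, adjugate_fin_two]

theorem cstar_mul (f : K →+* K) (A B : Matrix (Fin 2) (Fin 2) K) :
    cstar f (A * B) = cstar f B * cstar f A := by
  simp only [cstar_eq_transpose_map, Matrix.map_mul, transpose_mul]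

theorem cstar_smul (f : K →+* K) (c : K) (A : Matrix (Fin 2) (Fin 2) K) :
    cstar f (c • A) = f c • cstar f A := by
  ext i j
  fin_cases i <;> fin_cases j <;> simp [cstar]

theorem cstar_cstar {f : K → K} (hf : Function.Involutive f) (A : Matrix (Fin 2) (Fin 2) K) :
    cstar f (cstar f A) = A := by
  ext i j
  fin_cases i <;> fin_cases j <;> simp [cstar, hf _]

theorem cstar_mul_mul_eq_smul {f : K →+* K} (hf : Function.Involutive f)
    {L M P : Matrix (Fin 2) (Fin 2) K} (hL : cstar f L = L) (hM : cstar f M = M) {s : K}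
    (hs : f s = s) (hMP : M * P = s • (pprime f P * L)) :
    cstar f P * M * P = (s * P.det) • L := by
  have hPM : cstar f P * M = s • (L * P.adjugate) := by
    rw [← hM, ← cstar_mul, hMP, pprime_eq_cstar_adjugate, cstar_smul, cstar_mul, cstar_cstar hf,
      hL, hs]
  rw [hPM, smul_mul, mul_assoc, adjugate_mul, Matrix.mul_smul, mul_one, smul_smul]

theorem apply_eq_self_of_cstar_smul {f : K →+* K} {L : Matrix (Fin 2) (Fin 2) K}
    (hL : cstar f L = L) (hL0 : L ≠ 0) {c : K} (hc : cstar f (c • L) = c • L) : f c = c := by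
  rw [cstar_smul, hL] at hc
  exact smul_left_injective K hL0 hc

theorem cstar_mul_mul_self {f : K →+* K} (hf : Function.Involutive f)
    {M : Matrix (Fin 2) (Fin 2) K} (hM : cstar f M = M) (P : Matrix (Fin 2) (Fin 2) K) :
    cstar f (cstar f P * M * P) = cstar f P * M * P := by
  rw [cstar_mul, cstar_mul, cstar_cstar hf, hM, mul_assoc]

theorem map_cstar {f : K → K} {φ : K →+* ℂ} (hφ : ∀ x, φ (f x) = starRingEnd ℂ (φ x))
    (A : Matrix (Fin 2) (Fin 2) K) : (cstar f A).map φ = (A.map φ)ᴴ := by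
  ext i j
  fin_cases i <;> fin_cases j <;> simp [cstar, hφ]

end Cstar

theorem Matrix.PosSemidef.nonneg_of_conjTranspose_mul_mul_eq_smul {𝕜 n : Type*} [RCLike 𝕜]
    [Fintype n] [Nonempty n] {A B X : Matrix n n 𝕜} (hA : A.PosSemidef) (hB : B.PosDef)
    {c : ℝ} (h : Xᴴ * A * X = (c : 𝕜) • B) : 0 ≤ c := by
  have hcB : ((c : 𝕜) • B).PosSemidef := h ▸ hA.conjTranspose_mul_mul_same X
  have hcb := hcB.diag_nonneg (i := Classical.arbitrary n)
  obtain ⟨b, hb, hbB⟩ := RCLike.pos_iff_exists_ofReal.mp (hB.diag_pos (i := Classical.arbitrary n))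
  rw [smul_apply, ← hbB, smul_eq_mul, ← RCLike.ofReal_mul, RCLike.ofReal_nonneg] at hcb
  exact nonneg_of_mul_nonneg_left hcb hb

theorem stmt14_general (K : Type*) [Field K] [NumberField K]
    (hdeg : Module.finrank ℚ K = 2)
    (σ : K ≃ₐ[ℚ] K) (hσne : σ ≠ (AlgEquiv.refl : K ≃ₐ[ℚ] K))
    (φ : K →+* ℂ) (hφσ : ∀ x, φ (σ x) = starRingEnd ℂ (φ x))
    (L M P : Matrix (Fin 2) (Fin 2) K)
    (hPint : ∀ i j, IsIntegral ℤ (P i j))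
    (hLherm : cstar (⇑σ) L = L) (hMherm : cstar (⇑σ) M = M)
    (hLpd : (L.map ⇑φ).PosDef) (hMpd : (M.map ⇑φ).PosDef)
    (h : M * P = pprime (⇑σ) P * L ∨ M * P = -(pprime (⇑σ) P * L)) :
    ∃ n : ℤ, P.det = (n : K) ∧ cstar (⇑σ) P * M * P = ((n.natAbs : K)) • L := by
  have hσ : Function.Involutive σ := fun x => φ.injective (by simp [hφσ])
  obtain ⟨ε, hMP⟩ : ∃ ε : ℤˣ, M * P = (ε : K) • (pprime σ P * L) := by
    rcases h with h | h
    · exact ⟨1, by simpa using h⟩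
    · exact ⟨-1, by simpa using h⟩
  have hPMP : cstar σ P * M * P = ((ε : K) * P.det) • L :=
    cstar_mul_mul_eq_smul (f := σ.toRingHom) hσ hLherm hMherm (map_intCast _ _) hMP
  have hL0 : L ≠ 0 := by
    rintro rfl
    simpa using hLpd.diag_pos (i := 0)
  have hfixed : σ (ε * P.det) = ε * P.det :=
    apply_eq_self_of_cstar_smul (f := σ.toRingHom) hLherm hL0
      (hPMP ▸ cstar_mul_mul_self (f := σ.toRingHom) hσ hMherm P)
  obtain ⟨q, hq⟩ := σ.exists_algebraMap_eq_of_apply_eq_self (hdeg ▸ Nat.prime_two) hσne hfixed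
  have hdint : IsIntegral ℤ ((ε : K) * P.det) := by
    rw [det_fin_two]
    exact isIntegral_algebraMap.mul
      (((hPint 0 0).mul (hPint 1 1)).sub ((hPint 0 1).mul (hPint 1 0)))
  obtain ⟨n, hdn⟩ := exists_intCast_eq_of_isIntegral_of_algebraMap_eq hdint hq
  have hn0 : 0 ≤ n := by
    have hPMPφ : (P.map φ)ᴴ * M.map φ * P.map φ = ((n : ℝ) : ℂ) • L.map φ := by
      rw [← map_cstar hφσ, ← Matrix.map_mul, ← Matrix.map_mul, hPMP, hdn]
      ext i j
      simp
    exact Int.cast_nonneg_iff.mp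
      (hMpd.posSemidef.nonneg_of_conjTranspose_mul_mul_eq_smul hLpd hPMPφ)
  refine ⟨ε * n, ?_, ?_⟩
  · rw [Int.cast_mul, ← hdn, ← mul_assoc, ← Int.cast_mul, ← Units.val_mul, Int.units_mul_self,
      Units.val_one, Int.cast_one, one_mul]
  · rw [hPMP, hdn, Int.natAbs_mul, Int.units_natAbs, one_mul, Nat.cast_natAbs, abs_of_nonneg hn0]

theorem stmt14 (K : Type*) [Field K] [NumberField K]
    (hdeg : Module.finrank ℚ K = 2) (himag : IsEmpty (K →+* ℝ))
    (σ : K ≃ₐ[ℚ] K) (hσ : ∀ x, σ (σ x) = x) (hσne : σ ≠ (AlgEquiv.refl : K ≃ₐ[ℚ] K))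
    (φ : K →+* ℂ) (hφσ : ∀ x, φ (σ x) = starRingEnd ℂ (φ x))
    (L M P : Matrix (Fin 2) (Fin 2) K)
    (hLint : ∀ i j, IsIntegral ℤ (L i j)) (hMint : ∀ i j, IsIntegral ℤ (M i j))
    (hPint : ∀ i j, IsIntegral ℤ (P i j))
    (hLherm : cstar (⇑σ) L = L) (hMherm : cstar (⇑σ) M = M)
    (hLpd : (L.map ⇑φ).PosDef) (hMpd : (M.map ⇑φ).PosDef)
    (h : M * P = pprime (⇑σ) P * L ∨ M * P = -(pprime (⇑σ) P * L)) :
    ∃ n : ℤ, P.det = (n : K) ∧ cstar (⇑σ) P * M * P = ((n.natAbs : K)) • L :=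
  stmt14_general K hdeg σ hσne φ hφσ L M P hPint hLherm hMherm hLpd hMpd h
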